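/- (Lemma 3) Assume the bounds of Assumption 1 hold for all arguments in (M)^I (not only (M₂)^I) together with Assumption 2, and fix masses m_i > 0 with Σ_{i=1}^I m_i = 1. Define the truncated logit operator 𝔏̄_iμ = (2 − m_i^{-1}‖μ_i‖)_+ · 𝔏_iμ. Then there exists a constant l̄ > 0 such that for every i ∈ {1,…,I} and all {μ}, {ν} ∈ (M)^I, ‖𝔏̄_iμ − 𝔏̄_iν‖ ≤ l̄ · Σ_{j=1}^I ‖μ_j − ν_j‖. -/

import Mathlib

open MeasureTheory Real

noncomputable section

/-- The action space `Ω = [0,1]`. -/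
abbrev Ω : Type := Set.Icc (0:ℝ) 1

/-- Tsallis deformed exponential `exp_q`. -/
noncomputable def texp (q z : ℝ) : ℝ :=
  if q = 1 then Real.exp z else (max (1 + (1 - q) * z) 0) ^ ((1:ℝ) / (1 - q))

/-- Total variation norm of a finite signed Borel measure on `Ω`. -/
noncomputable def tv (μ : SignedMeasure Ω) : ℝ := (μ.totalVariation Set.univ).toReal

/-- The density `y ↦ ∫_Ω [ exp_q(η⁻¹ ΔU_i(y,w,{μ})) / ∫_Ω exp_q(η⁻¹ ΔU_i(z,w,{μ})) dz ]^q dw`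
of the logit measure `𝔏_i μ`. -/
noncomputable def logitDensity (I : ℕ) (q η : ℝ)
    (U : Fin I → Ω → (Fin I → SignedMeasure Ω) → ℝ)
    (i : Fin I) (μ : Fin I → SignedMeasure Ω) (y : Ω) : ℝ :=
  ∫ w : Ω, (texp q (η⁻¹ * (U i y μ - U i w μ)) /
      ∫ z : Ω, texp q (η⁻¹ * (U i z μ - U i w μ))) ^ q

/-- The logit measure `𝔏_i μ`, as a signed measure on `Ω`. -/
noncomputable def Logit (I : ℕ) (q η : ℝ)
    (U : Fin I → Ω → (Fin I → SignedMeasure Ω) → ℝ)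
    (i : Fin I) (μ : Fin I → SignedMeasure Ω) : SignedMeasure Ω :=
  (volume : Measure Ω).withDensityᵥ (logitDensity I q η U i μ)

/-- The outflow rate `θ_i(q,η)` (evaluated at `{μ}`). -/
noncomputable def θfun (I : ℕ) (q η : ℝ)
    (U : Fin I → Ω → (Fin I → SignedMeasure Ω) → ℝ)
    (i : Fin I) (μ : Fin I → SignedMeasure Ω) : ℝ :=
  ∫ y : Ω, ∫ w : Ω, (texp q (η⁻¹ * (U i w μ - U i y μ)) /
      ∫ z : Ω, texp q (η⁻¹ * (U i z μ - U i y μ))) ^ q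

/-- The truncated logit operator `𝔏̄_i μ = (2 − m_i⁻¹‖μ_i‖)_+ · 𝔏_i μ`. -/
noncomputable def LogitTrunc (I : ℕ) (q η : ℝ) (m : Fin I → ℝ)
    (U : Fin I → Ω → (Fin I → SignedMeasure Ω) → ℝ)
    (i : Fin I) (μ : Fin I → SignedMeasure Ω) : SignedMeasure Ω :=
  (max (2 - (m i)⁻¹ * tv (μ i)) 0) • Logit I q η U i μ

/-!
Where the base `1 + (1 - q) z` is positive, `exp_q` is smooth and positive; Assumption 2 makes
this so on `[-B, B]` with `B = 2 η⁻¹ L`, which contains every value of `η⁻¹ ΔU_i`. By compactness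
`exp_q` is bounded between two positive constants and Lipschitz there, and Hölder continuity of
`U_i` makes every integrand continuous. The normalised kernel
`exp_q(η⁻¹ ΔU_i(y,w)) / ∫ exp_q(η⁻¹ ΔU_i(z,w)) dz` therefore takes values in a compact
subinterval of `(0, ∞)`, on which `t ↦ t ^ q` is bounded and Lipschitz, so the logit density is
uniformly bounded and Lipschitz in the sup-distance of the potentials, which Assumption 1 bounds
by `L Σ_j ‖μ_j − ν_j‖`. Finally the truncation factor is bounded by `2` and `m_i⁻¹`-Lipschitz in
`‖μ_i‖`, and a measure with density `h` has total variation at most `sup |h|`.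
-/

open Set Filter Topology

lemma abs_div_sub_div_le {a a' b b' c₁ c₂ : ℝ} (hc₁ : 0 < c₁) (hb : c₁ ≤ b) (hb' : c₁ ≤ b')
    (ha' : |a'| ≤ c₂) : |a / b - a' / b'| ≤ (|a - a'| + c₂ / c₁ * |b - b'|) / c₁ := by
  have hb0 : 0 < b := hc₁.trans_le hb
  have hb'0 : 0 < b' := hc₁.trans_le hb'
  have hc₂ : 0 ≤ c₂ := (abs_nonneg _).trans ha'
  have hsplit : a / b - a' / b' = (a - a') / b + a' / b' * (b' - b) / b := by
    field_simp
    ring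
  have hratio : |a' / b'| ≤ c₂ / c₁ := by
    rw [abs_div, abs_of_pos hb'0]
    exact div_le_div₀ hc₂ ha' hc₁ hb'
  rw [hsplit, add_div]
  refine (abs_add_le _ _).trans (add_le_add ?_ ?_)
  · rw [abs_div, abs_of_pos hb0]
    exact div_le_div_of_nonneg_left (abs_nonneg _) hc₁ hb
  · rw [abs_div, abs_mul, abs_of_pos hb0, abs_sub_comm b' b]
    exact div_le_div₀ (by positivity) (mul_le_mul_of_nonneg_right hratio (abs_nonneg _)) hc₁ hb

lemma abs_mul_sub_mul_le (a b x y : ℝ) : |a * x - b * y| ≤ |a - b| * |x| + |b| * |x - y| := by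
  rw [← abs_mul, ← abs_mul, show a * x - b * y = (a - b) * x + b * (x - y) by ring]
  exact abs_add_le _ _

lemma abs_max_sub_mul_sub_max_sub_mul_le {a c s t : ℝ} (ha : 0 ≤ a) :
    |max (c - a * s) 0 - max (c - a * t) 0| ≤ a * |s - t| := by
  refine (abs_max_sub_max_le_abs _ _ _).trans_eq ?_
  rw [show c - a * s - (c - a * t) = a * (t - s) by ring, abs_mul, abs_of_nonneg ha, abs_sub_comm]

lemma abs_max_sub_mul_zero_le {a c t : ℝ} (hc : 0 ≤ c) (hat : 0 ≤ a * t) :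
    |max (c - a * t) 0| ≤ c := by
  rw [abs_of_nonneg (le_max_right _ _)]
  exact max_le (by linarith) hc

lemma exists_mem_Icc_of_continuousOn_pos {X : Type*} [TopologicalSpace X] {f : X → ℝ}
    {s : Set X} (hs : IsCompact s) (hf : ContinuousOn f s) (hf0 : ∀ z ∈ s, 0 < f z) :
    ∃ c₁ c₂, 0 < c₁ ∧ c₁ ≤ c₂ ∧ ∀ z ∈ s, f z ∈ Icc c₁ c₂ := by
  obtain ⟨c₁, hc₁, hle⟩ := hs.exists_forall_le' hf hf0
  obtain ⟨c₂, hc₂⟩ := hs.bddAbove_image hf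
  exact ⟨c₁, max c₁ c₂, hc₁, le_max_left _ _,
    fun z hz => ⟨hle z hz, le_max_of_le_right (hc₂ (mem_image_of_mem f hz))⟩⟩

lemma continuous_of_abs_sub_le_mul_rpow {X : Type*} [PseudoMetricSpace X] {g : X → ℝ}
    {C d : ℝ} (hd : 0 < d) (h : ∀ x y, |g x - g y| ≤ C * dist x y ^ d) : Continuous g := by
  refine continuous_iff_continuousAt.2 fun x => tendsto_iff_dist_tendsto_zero.2 ?_
  refine squeeze_zero (fun _ => dist_nonneg) (fun y => (Real.dist_eq _ _).trans_le (h y x)) ?_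
  have : Continuous fun y => C * dist y x ^ d :=
    continuous_const.mul ((continuous_id.dist continuous_const).rpow_const fun _ => Or.inr hd.le)
  simpa [Real.zero_rpow hd.ne'] using this.tendsto x

lemma Continuous.integrable_of_compactSpace {X : Type*} [TopologicalSpace X] [CompactSpace X]
    [MeasurableSpace X] [OpensMeasurableSpace X] {μ : Measure X} [IsFiniteMeasure μ] {g : X → ℝ}
    (hg : Continuous g) : Integrable g μ :=
  hg.integrable_of_hasCompactSupport (HasCompactSupport.of_compactSpace g)

section Integrals

variable {α : Type*} [MeasurableSpace α] {μ : Measure α} [IsProbabilityMeasure μ]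

lemma integral_mem_Icc {g : α → ℝ} {a b : ℝ} (hg : Integrable g μ) (hab : ∀ x, g x ∈ Icc a b) :
    ∫ x, g x ∂μ ∈ Icc a b := by
  constructor
  · simpa using integral_mono (integrable_const a) hg fun x => (hab x).1
  · simpa using integral_mono hg (integrable_const b) fun x => (hab x).2

lemma abs_integral_sub_integral_le {g h : α → ℝ} {C : ℝ} (hg : Integrable g μ)
    (hh : Integrable h μ) (hgh : ∀ x, |g x - h x| ≤ C) :
    |∫ x, g x ∂μ - ∫ x, h x ∂μ| ≤ C := by
  rw [← integral_sub hg hh]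
  simpa using norm_integral_le_of_norm_le_const (μ := μ) (f := fun x => g x - h x)
    (Eventually.of_forall hgh)

end Integrals

lemma smul_withDensityᵥ_sub_smul_withDensityᵥ {α : Type*} [MeasurableSpace α] {μ : Measure α}
    {f g : α → ℝ} (hf : Integrable f μ) (hg : Integrable g μ) (a b : ℝ) :
    a • μ.withDensityᵥ f - b • μ.withDensityᵥ g = μ.withDensityᵥ fun x => a * f x - b * g x := by
  rw [← withDensityᵥ_smul, ← withDensityᵥ_smul, ← withDensityᵥ_sub (hf.smul a) (hg.smul b)]
  rfl

section TotalVariation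

lemma tv_eq_variation (s : SignedMeasure Ω) : tv s = (s.variation univ).toReal := by
  rw [tv, SignedMeasure.totalVariation_eq_variation]

lemma tv_nonneg (s : SignedMeasure Ω) : 0 ≤ tv s := ENNReal.toReal_nonneg

lemma tv_neg (s : SignedMeasure Ω) : tv (-s) = tv s := by
  rw [tv, tv, SignedMeasure.totalVariation_neg]

lemma tv_add_le (s t : SignedMeasure Ω) : tv (s + t) ≤ tv s + tv t := by
  simp only [tv]
  rw [← ENNReal.toReal_add (measure_ne_top _ _) (measure_ne_top _ _)]
  refine ENNReal.toReal_mono (by finiteness) ?_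
  simp only [SignedMeasure.totalVariation_eq_variation, ← Measure.add_apply]
  exact VectorMeasure.variation_add_le univ

lemma abs_tv_sub_tv_le (s t : SignedMeasure Ω) : |tv s - tv t| ≤ tv (s - t) := by
  have hs := tv_add_le (s - t) t
  have ht := tv_add_le (t - s) s
  rw [sub_add_cancel] at hs ht
  rw [← neg_sub, tv_neg] at ht
  exact abs_sub_le_iff.2 ⟨by linarith, by linarith⟩

lemma tv_withDensityᵥ_le {f : Ω → ℝ} {C : ℝ} (hf : Integrable f) (hfC : ∀ x, |f x| ≤ C) :
    tv ((volume : Measure Ω).withDensityᵥ f) ≤ C := by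
  have hC : 0 ≤ C := (abs_nonneg _).trans (hfC ⟨0, by norm_num⟩)
  have hvar : ((volume : Measure Ω).withDensityᵥ f).variation ≤ ENNReal.ofReal C • volume := by
    refine VectorMeasure.variation_le_of_forall_enorm_le fun E hE => ?_
    rw [withDensityᵥ_apply hf hE, Measure.smul_apply, smul_eq_mul, ← ofReal_norm,
      ← ofReal_measureReal, ← ENNReal.ofReal_mul hC]
    refine ENNReal.ofReal_le_ofReal ?_
    simpa [mul_comm] using norm_integral_le_of_norm_le_const (μ := volume.restrict E)
      (Eventually.of_forall fun x => (Real.norm_eq_abs (f x)).le.trans (hfC x))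
  rw [tv_eq_variation]
  refine ENNReal.toReal_le_of_le_ofReal hC ((hvar univ).trans ?_)
  simp

lemma tv_smul_withDensityᵥ_sub_smul_withDensityᵥ_le {f g : Ω → ℝ} {a b c M D : ℝ}
    (hf : Integrable f) (hg : Integrable g) (hfM : ∀ y, |f y| ≤ M) (hfg : ∀ y, |f y - g y| ≤ D)
    (hb : |b| ≤ c) :
    tv (a • (volume : Measure Ω).withDensityᵥ f - b • (volume : Measure Ω).withDensityᵥ g) ≤
      |a - b| * M + c * D := by
  rw [smul_withDensityᵥ_sub_smul_withDensityᵥ hf hg]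
  refine tv_withDensityᵥ_le ((hf.const_mul a).sub (hg.const_mul b)) fun y => ?_
  refine (abs_mul_sub_mul_le _ _ _ _).trans (add_le_add ?_ ?_)
  · exact mul_le_mul_of_nonneg_left (hfM y) (abs_nonneg _)
  · exact mul_le_mul hb (hfg y) (abs_nonneg _) ((abs_nonneg _).trans hb)

end TotalVariation

section TsallisExp

variable {q z B : ℝ}

lemma texp_one : texp 1 = Real.exp := by
  funext z
  simp [texp]

lemma texp_eq_rpow (hq : q ≠ 1) (hz : 0 < 1 + (1 - q) * z) :
    texp q z = (1 + (1 - q) * z) ^ (1 / (1 - q)) := by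
  rw [texp, if_neg hq, max_eq_left hz.le]

lemma texp_pos (hz : 0 < 1 + (1 - q) * z) : 0 < texp q z := by
  rcases eq_or_ne q 1 with rfl | hq
  · exact texp_one ▸ Real.exp_pos z
  · exact texp_eq_rpow hq hz ▸ Real.rpow_pos_of_pos hz _

lemma contDiffAt_texp {n : WithTop ℕ∞} (hz : 0 < 1 + (1 - q) * z) :
    ContDiffAt ℝ n (texp q) z := by
  rcases eq_or_ne q 1 with rfl | hq
  · exact texp_one ▸ Real.contDiff_exp.contDiffAt
  have hbase : ContDiff ℝ n fun x : ℝ => 1 + (1 - q) * x := by fun_prop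
  have heq : (fun x => (1 + (1 - q) * x) ^ (1 / (1 - q))) =ᶠ[𝓝 z] texp q :=
    (hbase.continuous.continuousAt.eventually (lt_mem_nhds hz)).mono
      fun x hx => (texp_eq_rpow hq hx).symm
  have hrpow : ContDiffAt ℝ n (fun x => (1 + (1 - q) * x) ^ (1 / (1 - q))) z :=
    ContDiffAt.comp (g := fun x : ℝ => x ^ (1 / (1 - q))) z
      (Real.contDiffAt_rpow_const_of_ne hz.ne') hbase.contDiffAt
  exact hrpow.congr_of_eventuallyEq heq.symm

lemma one_add_mul_pos_of_mem_Icc (hB : 0 < 1 - |1 - q| * B) (hz : z ∈ Icc (-B) B) :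
    0 < 1 + (1 - q) * z := by
  have : |(1 - q) * z| ≤ |1 - q| * B := by
    rw [abs_mul]
    exact mul_le_mul_of_nonneg_left (abs_le.2 hz) (abs_nonneg _)
  linarith [neg_abs_le ((1 - q) * z)]

lemma contDiffOn_texp (hB : 0 < 1 - |1 - q| * B) : ContDiffOn ℝ 1 (texp q) (Icc (-B) B) :=
  fun _ hz => (contDiffAt_texp (one_add_mul_pos_of_mem_Icc hB hz)).contDiffWithinAt

end TsallisExp

section LogitKernel

def AdmissiblePotential (B : ℝ) (φ : Ω → ℝ) : Prop :=
  Continuous φ ∧ ∀ x y, φ x - φ y ∈ Icc (-B) B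

def logitKernel (f : ℝ → ℝ) (φ : Ω → ℝ) (y w : Ω) : ℝ :=
  f (φ y - φ w) / ∫ z : Ω, f (φ z - φ w)

def kernelDensity (f : ℝ → ℝ) (q : ℝ) (φ : Ω → ℝ) (y : Ω) : ℝ :=
  ∫ w : Ω, logitKernel f φ y w ^ q

variable {f : ℝ → ℝ} {q B c₁ c₂ : ℝ} {φ ψ : Ω → ℝ}

lemma AdmissiblePotential.continuous_comp_sub (hf : ContinuousOn f (Icc (-B) B))
    (hφ : AdmissiblePotential B φ) : Continuous fun p : Ω × Ω => f (φ p.1 - φ p.2) :=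
  hf.comp_continuous ((hφ.1.comp continuous_fst).sub (hφ.1.comp continuous_snd))
    fun p => hφ.2 p.1 p.2

lemma AdmissiblePotential.integrable_comp_sub (hf : ContinuousOn f (Icc (-B) B))
    (hφ : AdmissiblePotential B φ) (w : Ω) : Integrable fun z : Ω => f (φ z - φ w) :=
  ((hφ.continuous_comp_sub hf).comp
    (continuous_id.prodMk continuous_const)).integrable_of_compactSpace

lemma AdmissiblePotential.continuous_partition (hf : ContinuousOn f (Icc (-B) B))
    (hφ : AdmissiblePotential B φ) : Continuous fun w => ∫ z : Ω, f (φ z - φ w) := by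
  have := continuous_parametric_integral_of_continuous (μ := (volume : Measure Ω))
    (f := fun w z => f (φ z - φ w)) ((hφ.continuous_comp_sub hf).comp continuous_swap)
    isCompact_univ
  simpa using this

lemma AdmissiblePotential.partition_mem_Icc (hf : ContinuousOn f (Icc (-B) B))
    (hfc : ∀ z ∈ Icc (-B) B, f z ∈ Icc c₁ c₂) (hφ : AdmissiblePotential B φ) (w : Ω) :
    ∫ z : Ω, f (φ z - φ w) ∈ Icc c₁ c₂ :=
  integral_mem_Icc (hφ.integrable_comp_sub hf w) fun z => hfc _ (hφ.2 z w)

lemma AdmissiblePotential.logitKernel_mem_Icc (hf : ContinuousOn f (Icc (-B) B))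
    (hfc : ∀ z ∈ Icc (-B) B, f z ∈ Icc c₁ c₂) (hc₁ : 0 < c₁) (hφ : AdmissiblePotential B φ)
    (y w : Ω) : logitKernel f φ y w ∈ Icc (c₁ / c₂) (c₂ / c₁) := by
  obtain ⟨hZ₁, hZ₂⟩ := hφ.partition_mem_Icc hf hfc w
  obtain ⟨hf₁, hf₂⟩ := hfc _ (hφ.2 y w)
  have hc₂ : 0 < c₂ := hc₁.trans_le (hf₁.trans hf₂)
  exact ⟨div_le_div₀ (hc₁.trans_le hf₁).le hf₁ (hc₁.trans_le hZ₁) hZ₂,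
    div_le_div₀ hc₂.le hf₂ hc₁ hZ₁⟩

lemma AdmissiblePotential.continuous_logitKernel_rpow (hf : ContinuousOn f (Icc (-B) B))
    (hfc : ∀ z ∈ Icc (-B) B, f z ∈ Icc c₁ c₂) (hc₁ : 0 < c₁) (hφ : AdmissiblePotential B φ) :
    Continuous fun p : Ω × Ω => logitKernel f φ p.1 p.2 ^ q := by
  have hZ := (hφ.continuous_partition hf).comp (continuous_snd (X := Ω))
  have hZ₀ : ∀ w, 0 < ∫ z : Ω, f (φ z - φ w) := fun w =>
    hc₁.trans_le (hφ.partition_mem_Icc hf hfc w).1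
  refine ((hφ.continuous_comp_sub hf).div hZ fun p => (hZ₀ p.2).ne').rpow_const fun p => ?_
  exact Or.inl (div_pos (hc₁.trans_le (hfc _ (hφ.2 p.1 p.2)).1) (hZ₀ p.2)).ne'

lemma AdmissiblePotential.continuous_kernelDensity (hf : ContinuousOn f (Icc (-B) B))
    (hfc : ∀ z ∈ Icc (-B) B, f z ∈ Icc c₁ c₂) (hc₁ : 0 < c₁) (hφ : AdmissiblePotential B φ) :
    Continuous (kernelDensity f q φ) := by
  unfold kernelDensity
  simpa using continuous_parametric_integral_of_continuous
    (μ := (volume : Measure Ω)) (hφ.continuous_logitKernel_rpow (q := q) hf hfc hc₁)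
    isCompact_univ

lemma AdmissiblePotential.abs_comp_sub_sub_le {K : NNReal} {δ : ℝ}
    (hfK : LipschitzOnWith K f (Icc (-B) B)) (hφ : AdmissiblePotential B φ)
    (hψ : AdmissiblePotential B ψ) (hδ : ∀ x, |φ x - ψ x| ≤ δ) (y w : Ω) :
    |f (φ y - φ w) - f (ψ y - ψ w)| ≤ K * (2 * δ) := by
  have hK := hfK.dist_le_mul _ (hφ.2 y w) _ (hψ.2 y w)
  rw [Real.dist_eq, Real.dist_eq] at hK
  refine hK.trans (mul_le_mul_of_nonneg_left ?_ K.2)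
  calc |φ y - φ w - (ψ y - ψ w)| = |(φ y - ψ y) - (φ w - ψ w)| := by ring_nf
    _ ≤ |φ y - ψ y| + |φ w - ψ w| := abs_sub _ _
    _ ≤ 2 * δ := by linarith [hδ y, hδ w]

lemma AdmissiblePotential.abs_logitKernel_sub_le {K : NNReal} {δ : ℝ}
    (hf : ContinuousOn f (Icc (-B) B)) (hfc : ∀ z ∈ Icc (-B) B, f z ∈ Icc c₁ c₂)
    (hc₁ : 0 < c₁) (hfK : LipschitzOnWith K f (Icc (-B) B)) (hφ : AdmissiblePotential B φ)
    (hψ : AdmissiblePotential B ψ) (hδ : ∀ x, |φ x - ψ x| ≤ δ) (y w : Ω) :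
    |logitKernel f φ y w - logitKernel f ψ y w| ≤ (1 + c₂ / c₁) * (K * (2 * δ)) / c₁ := by
  have hcomp := hφ.abs_comp_sub_sub_le hfK hψ hδ
  have hZ : |(∫ z : Ω, f (φ z - φ w)) - ∫ z : Ω, f (ψ z - ψ w)| ≤ K * (2 * δ) :=
    abs_integral_sub_integral_le (hφ.integrable_comp_sub hf w) (hψ.integrable_comp_sub hf w)
      fun z => hcomp z w
  obtain ⟨hψ₁, hψ₂⟩ := hfc _ (hψ.2 y w)
  have hfψ : |f (ψ y - ψ w)| ≤ c₂ := by rw [abs_of_pos (hc₁.trans_le hψ₁)]; exact hψ₂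
  refine (abs_div_sub_div_le hc₁ (hφ.partition_mem_Icc hf hfc w).1
    (hψ.partition_mem_Icc hf hfc w).1 hfψ).trans ?_
  have hc₂ : 0 ≤ c₂ / c₁ := div_nonneg (hc₁.le.trans (hψ₁.trans hψ₂)) hc₁.le
  rw [add_mul, one_mul]
  gcongr
  exact hcomp y w

lemma AdmissiblePotential.integrable_logitKernel_rpow (hf : ContinuousOn f (Icc (-B) B))
    (hfc : ∀ z ∈ Icc (-B) B, f z ∈ Icc c₁ c₂) (hc₁ : 0 < c₁) (hφ : AdmissiblePotential B φ)
    (y : Ω) : Integrable fun w => logitKernel f φ y w ^ q :=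
  ((hφ.continuous_logitKernel_rpow hf hfc hc₁).comp
    (continuous_const.prodMk continuous_id)).integrable_of_compactSpace

lemma AdmissiblePotential.abs_kernelDensity_le {M : ℝ} (hf : ContinuousOn f (Icc (-B) B))
    (hfc : ∀ z ∈ Icc (-B) B, f z ∈ Icc c₁ c₂) (hc₁ : 0 < c₁) (hφ : AdmissiblePotential B φ)
    (hM : ∀ x ∈ Icc (c₁ / c₂) (c₂ / c₁), |x ^ q| ≤ M) (y : Ω) :
    |kernelDensity f q φ y| ≤ M := by
  simpa [kernelDensity] using norm_integral_le_of_norm_le_const (μ := (volume : Measure Ω))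
    (f := fun w => logitKernel f φ y w ^ q)
    (Eventually.of_forall fun w => hM _ (hφ.logitKernel_mem_Icc hf hfc hc₁ y w))

lemma AdmissiblePotential.abs_kernelDensity_sub_le {K Kq : NNReal} {δ : ℝ}
    (hf : ContinuousOn f (Icc (-B) B)) (hfc : ∀ z ∈ Icc (-B) B, f z ∈ Icc c₁ c₂)
    (hc₁ : 0 < c₁) (hfK : LipschitzOnWith K f (Icc (-B) B))
    (hpow : LipschitzOnWith Kq (fun x : ℝ => x ^ q) (Icc (c₁ / c₂) (c₂ / c₁)))
    (hφ : AdmissiblePotential B φ) (hψ : AdmissiblePotential B ψ)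
    (hδ : ∀ x, |φ x - ψ x| ≤ δ) (y : Ω) :
    |kernelDensity f q φ y - kernelDensity f q ψ y| ≤
      Kq * ((1 + c₂ / c₁) * (K * (2 * δ)) / c₁) := by
  refine abs_integral_sub_integral_le (hφ.integrable_logitKernel_rpow hf hfc hc₁ y)
    (hψ.integrable_logitKernel_rpow hf hfc hc₁ y) fun w => ?_
  have h := hpow.dist_le_mul _ (hφ.logitKernel_mem_Icc hf hfc hc₁ y w)
    _ (hψ.logitKernel_mem_Icc hf hfc hc₁ y w)
  rw [Real.dist_eq, Real.dist_eq] at h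
  exact h.trans (mul_le_mul_of_nonneg_left (hφ.abs_logitKernel_sub_le hf hfc hc₁ hfK hψ hδ y w)
    Kq.2)

theorem exists_abs_kernelDensity_le_and_sub_le (hf : ContDiffOn ℝ 1 f (Icc (-B) B))
    (hf0 : ∀ z ∈ Icc (-B) B, 0 < f z) (q : ℝ) :
    ∃ M C : ℝ, (∀ φ, AdmissiblePotential B φ →
        Continuous (kernelDensity f q φ) ∧ ∀ y, |kernelDensity f q φ y| ≤ M) ∧
      ∀ φ ψ δ, AdmissiblePotential B φ → AdmissiblePotential B ψ → (∀ x, |φ x - ψ x| ≤ δ) →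
        ∀ y, |kernelDensity f q φ y - kernelDensity f q ψ y| ≤ C * δ := by
  obtain ⟨c₁, c₂, hc₁, hc₁₂, hfc⟩ :=
    exists_mem_Icc_of_continuousOn_pos isCompact_Icc hf.continuousOn hf0
  obtain ⟨K, hfK⟩ := hf.exists_lipschitzOnWith one_ne_zero (convex_Icc _ _) isCompact_Icc
  have hpow : ContDiffOn ℝ 1 (fun x : ℝ => x ^ q) (Icc (c₁ / c₂) (c₂ / c₁)) := fun x hx =>
    (Real.contDiffAt_rpow_const_of_ne
      ((div_pos hc₁ (hc₁.trans_le hc₁₂)).trans_le hx.1).ne').contDiffWithinAt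
  obtain ⟨M, hM⟩ := isCompact_Icc.exists_bound_of_continuousOn hpow.continuousOn
  obtain ⟨Kq, hKq⟩ := hpow.exists_lipschitzOnWith one_ne_zero (convex_Icc _ _) isCompact_Icc
  refine ⟨M, Kq * ((1 + c₂ / c₁) * (K * 2) / c₁), fun φ hφ => ?_,
    fun φ ψ δ hφ hψ hδ y => ?_⟩
  · exact ⟨hφ.continuous_kernelDensity hf.continuousOn hfc hc₁,
      hφ.abs_kernelDensity_le hf.continuousOn hfc hc₁ hM⟩
  · have h := hφ.abs_kernelDensity_sub_le hf.continuousOn hfc hc₁ hfK hKq hψ hδ y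
    convert h using 1
    ring

end LogitKernel

lemma admissiblePotential_const_mul {g : Ω → ℝ} {a L : ℝ} (ha : 0 ≤ a) (hg : Continuous g)
    (hgL : ∀ x, |g x| ≤ L) : AdmissiblePotential (2 * a * L) fun x => a * g x := by
  refine ⟨continuous_const.mul hg, fun x y => abs_le.1 ?_⟩
  rw [← mul_sub, abs_mul, abs_of_nonneg ha, mul_assoc, mul_left_comm]
  refine mul_le_mul_of_nonneg_left ?_ ha
  linarith [abs_sub (g x) (g y), hgL x, hgL y]

lemma logitDensity_eq_kernelDensity (I : ℕ) (q η : ℝ)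
    (U : Fin I → Ω → (Fin I → SignedMeasure Ω) → ℝ) (i : Fin I) (μ : Fin I → SignedMeasure Ω) :
    logitDensity I q η U i μ = kernelDensity (texp q) q fun x => η⁻¹ * U i x μ := by
  funext y
  simp only [logitDensity, kernelDensity, logitKernel, mul_sub]

lemma one_sub_abs_mul_pos {q η L : ℝ} (hA2 : q ≠ 1 → ∃ g > 0, 1 - 2 * |1 - q| * η⁻¹ * L ≥ g) :
    0 < 1 - |1 - q| * (2 * η⁻¹ * L) := by
  rcases eq_or_ne q 1 with rfl | hq
  · simp
  · obtain ⟨g, hg, hgle⟩ := hA2 hq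
    linarith [show |1 - q| * (2 * η⁻¹ * L) = 2 * |1 - q| * η⁻¹ * L by ring]

theorem exists_abs_logitDensity_le_and_sub_le {I : ℕ} {q η L d : ℝ}
    {U : Fin I → Ω → (Fin I → SignedMeasure Ω) → ℝ} (hη : 0 < η) (hd : 0 < d)
    (hU1 : ∀ i x μ, |U i x μ| ≤ L)
    (hU2 : ∀ i x y μ, |U i x μ - U i y μ| ≤ L * |(x : ℝ) - (y : ℝ)| ^ d)
    (hU3 : ∀ i x μ ν, |U i x μ - U i x ν| ≤ L * ∑ j, tv (μ j - ν j))
    (hB : 0 < 1 - |1 - q| * (2 * η⁻¹ * L)) :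
    ∃ M C : ℝ, (∀ i μ, Continuous (logitDensity I q η U i μ) ∧
        ∀ y, |logitDensity I q η U i μ y| ≤ M) ∧
      ∀ i μ ν y, |logitDensity I q η U i μ y - logitDensity I q η U i ν y| ≤
        C * ∑ j, tv (μ j - ν j) := by
  obtain ⟨M, C, hM, hC⟩ := exists_abs_kernelDensity_le_and_sub_le (contDiffOn_texp hB)
    (fun _ hz => texp_pos (one_add_mul_pos_of_mem_Icc hB hz)) q
  have hadm : ∀ i μ, AdmissiblePotential (2 * η⁻¹ * L) fun x => η⁻¹ * U i x μ :=
    fun i μ => admissiblePotential_const_mul (inv_nonneg.2 hη.le)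
      (continuous_of_abs_sub_le_mul_rpow hd (hU2 i · · μ)) (hU1 i · μ)
  refine ⟨M, C * η⁻¹ * L, fun i μ => ?_, fun i μ ν y => ?_⟩
  · rw [logitDensity_eq_kernelDensity]
    exact hM _ (hadm i μ)
  · rw [logitDensity_eq_kernelDensity, logitDensity_eq_kernelDensity, mul_assoc, mul_assoc]
    refine hC _ _ _ (hadm i μ) (hadm i ν) (fun x => ?_) y
    rw [← mul_sub, abs_mul, abs_of_pos (inv_pos.2 hη)]
    exact mul_le_mul_of_nonneg_left (hU3 i x μ ν) (inv_pos.2 hη).le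

theorem logitTrunc_lipschitz_general (I : ℕ) (q η L d : ℝ) (m : Fin I → ℝ)
    (U : Fin I → Ω → (Fin I → SignedMeasure Ω) → ℝ)
    (hη : 0 < η) (hd : d ∈ Set.Ioc (0:ℝ) 1)
    (hm : ∀ i, 0 < m i)
    (hU1 : ∀ (i : Fin I) (x : Ω) (μ : Fin I → SignedMeasure Ω), |U i x μ| ≤ L)
    (hU2 : ∀ (i : Fin I) (x y : Ω) (μ : Fin I → SignedMeasure Ω),
      |U i x μ - U i y μ| ≤ L * |(x : ℝ) - (y : ℝ)| ^ d)
    (hU3 : ∀ (i : Fin I) (x : Ω) (μ ν : Fin I → SignedMeasure Ω),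
      |U i x μ - U i x ν| ≤ L * ∑ j, tv (μ j - ν j))
    (hA2 : q ≠ 1 → ∃ g > 0, 1 - 2 * |1 - q| * η⁻¹ * L ≥ g) :
    ∃ lbar > 0, ∀ (i : Fin I) (μ ν : Fin I → SignedMeasure Ω),
      tv (LogitTrunc I q η m U i μ - LogitTrunc I q η m U i ν) ≤
        lbar * ∑ j, tv (μ j - ν j) := by
  obtain ⟨M, C, hM, hC⟩ := exists_abs_logitDensity_le_and_sub_le hη hd.1 hU1 hU2 hU3
    (one_sub_abs_mul_pos hA2)
  set A := ∑ j, (m j)⁻¹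
  refine ⟨max (A * M + 2 * C) 1, lt_max_of_lt_right one_pos, fun i μ ν => ?_⟩
  set S := ∑ j, tv (μ j - ν j)
  obtain ⟨hcontμ, hboundμ⟩ := hM i μ
  have hM0 : 0 ≤ M := (abs_nonneg _).trans (hboundμ ⟨0, by norm_num⟩)
  have hmi : 0 ≤ (m i)⁻¹ := (inv_pos.2 (hm i)).le
  have hmA : (m i)⁻¹ ≤ A :=
    Finset.single_le_sum (fun j _ => (inv_pos.2 (hm j)).le) (Finset.mem_univ i)
  have hS : tv (μ i - ν i) ≤ S :=
    Finset.single_le_sum (fun j _ => tv_nonneg (μ j - ν j)) (Finset.mem_univ i)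
  calc tv (LogitTrunc I q η m U i μ - LogitTrunc I q η m U i ν)
      ≤ |max (2 - (m i)⁻¹ * tv (μ i)) 0 - max (2 - (m i)⁻¹ * tv (ν i)) 0| * M + 2 * (C * S) :=
        tv_smul_withDensityᵥ_sub_smul_withDensityᵥ_le hcontμ.integrable_of_compactSpace
          (hM i ν).1.integrable_of_compactSpace hboundμ (hC i μ ν)
          (abs_max_sub_mul_zero_le zero_le_two (mul_nonneg hmi (tv_nonneg _)))
    _ ≤ A * S * M + 2 * (C * S) := by
        gcongr
        exact (abs_max_sub_mul_sub_max_sub_mul_le hmi).trans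
          (mul_le_mul hmA ((abs_tv_sub_tv_le _ _).trans hS) (abs_nonneg _) (hmi.trans hmA))
    _ = (A * M + 2 * C) * S := by ring
    _ ≤ max (A * M + 2 * C) 1 * S :=
        mul_le_mul_of_nonneg_right (le_max_left _ _) ((tv_nonneg _).trans hS)

/-- Lemma 3: assume the bounds of Assumption 1 hold for all
arguments in `(M)^I`, together with Assumption 2, and fix masses `m_i > 0` with
`Σ_i m_i = 1`. Then there exists `l̄ > 0` such that for every `i` and all
`{μ}, {ν} ∈ (M)^I`, `‖𝔏̄_i μ − 𝔏̄_i ν‖ ≤ l̄ Σ_j ‖μ_j − ν_j‖`. -/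
theorem logitTrunc_lipschitz (I : ℕ) (q η L d : ℝ) (m : Fin I → ℝ)
    (U : Fin I → Ω → (Fin I → SignedMeasure Ω) → ℝ)
    (hq : 0 < q) (hη : 0 < η) (hL : 0 < L) (hd : d ∈ Set.Ioc (0:ℝ) 1)
    (hm : ∀ i, 0 < m i) (hmsum : ∑ i, m i = 1)
    (hU1 : ∀ (i : Fin I) (x : Ω) (μ : Fin I → SignedMeasure Ω), |U i x μ| ≤ L)
    (hU2 : ∀ (i : Fin I) (x y : Ω) (μ : Fin I → SignedMeasure Ω),
      |U i x μ - U i y μ| ≤ L * |(x : ℝ) - (y : ℝ)| ^ d)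
    (hU3 : ∀ (i : Fin I) (x : Ω) (μ ν : Fin I → SignedMeasure Ω),
      |U i x μ - U i x ν| ≤ L * ∑ j, tv (μ j - ν j))
    (hA2 : q ≠ 1 → ∃ g > 0, 1 - 2 * |1 - q| * η⁻¹ * L ≥ g) :
    ∃ lbar > 0, ∀ (i : Fin I) (μ ν : Fin I → SignedMeasure Ω),
      tv (LogitTrunc I q η m U i μ - LogitTrunc I q η m U i ν) ≤
        lbar * ∑ j, tv (μ j - ν j) :=
  logitTrunc_lipschitz_general I q η L d m U hη hd hm hU1 hU2 hU3 hA2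

end
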